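/- arXiv:1108.5670 — 4 statements merged into one kernel-verified Lean document; each statement's English description precedes it below -/
import Mathlib

section
/- Let p be a prime and R an associative ring in which p = 0 (i.e., an algebra over a field or ring of characteristic p). Then for all x, y in R and every natural number t, the iterated commutator ad_y^{p^t}(x) equals [x, y^{p^t}]. -/
open LinearMap

/-- The inner derivation `a ↦ a * y - y * a` is `mulRight y - mulLeft y`, whose two terms commute,
so in characteristic `p` its `p ^ t`-th power is `mulRight (y ^ p ^ t) - mulLeft (y ^ p ^ t)`. -/
theorem iterate_mul_sub_mul_char_pow {R : Type*} [Ring R] (p : ℕ) [Fact p.Prime] [CharP R p]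
    (x y : R) (t : ℕ) :
    (fun a => a * y - y * a)^[p ^ t] x = x * y ^ (p ^ t) - y ^ (p ^ t) * x := by
  have : CharP (Module.End ℤ R) p := charP_of_injective_ringHom (Algebra.lmul_injective (R := ℤ)) p
  have hfun : (fun a : R => a * y - y * a) = ⇑(mulRight ℤ y - mulLeft ℤ y) := by
    funext a
    simp
  rw [hfun, ← Module.End.pow_apply,
    sub_pow_char_pow_of_commute _ _ (commute_mulLeft_right y y).symm]
  simp [pow_mulRight, pow_mulLeft]

/-- In characteristic `p`, `ad_y^{p^t}(x) = [x, y^{p^t}]`. -/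
theorem stmt3 {R : Type*} [Ring R] (p : ℕ) (hp : p.Prime) (hchar : (p : R) = 0)
    (x y : R) (t : ℕ) :
    (fun a => a * y - y * a)^[p ^ t] x = x * y ^ (p ^ t) - y ^ (p ^ t) * x := by
  rcases subsingleton_or_nontrivial R with _ | _
  · exact Subsingleton.elim _ _
  have : Fact p.Prime := ⟨hp⟩
  have : CharP R p := (CharP.charP_iff_prime_eq_zero hp).2 hchar
  exact iterate_mul_sub_mul_char_pow p x y t
end

section
/- Let R be an associative ring satisfying the identity [[x_1,y_1],[x_2,y_2]] = 0 for all x_1, y_1, x_2, y_2. Then R satisfies [x_1,y_1,y_2]*[x_2,z] + [x_2,y_2]*[x_1,y_1,z] = 0 for all elements, where [a,b,c] denotes [[a,b],c]. -/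
/-- If `[[x₁,y₁],[x₂,y₂]] = 0` identically, then
`[x₁,y₁,y₂]*[x₂,z] + [x₂,y₂]*[x₁,y₁,z] = 0`. -/
theorem stmt7 {R : Type*} [Ring R]
    (h : ∀ x₁ y₁ x₂ y₂ : R,
      (x₁ * y₁ - y₁ * x₁) * (x₂ * y₂ - y₂ * x₂)
        - (x₂ * y₂ - y₂ * x₂) * (x₁ * y₁ - y₁ * x₁) = 0)
    (x₁ y₁ y₂ x₂ z : R) :
    ((x₁ * y₁ - y₁ * x₁) * y₂ - y₂ * (x₁ * y₁ - y₁ * x₁)) * (x₂ * z - z * x₂)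
      + (x₂ * y₂ - y₂ * x₂) * ((x₁ * y₁ - y₁ * x₁) * z - z * (x₁ * y₁ - y₁ * x₁)) = 0 := by
  have h1 := h x₁ y₁ x₂ (y₂ * z)
  have h2 := h x₁ y₁ x₂ y₂
  have h3 := h x₁ y₁ x₂ z
  have key : ((x₁ * y₁ - y₁ * x₁) * y₂ - y₂ * (x₁ * y₁ - y₁ * x₁)) * (x₂ * z - z * x₂)
      + (x₂ * y₂ - y₂ * x₂) * ((x₁ * y₁ - y₁ * x₁) * z - z * (x₁ * y₁ - y₁ * x₁))
      = ((x₁ * y₁ - y₁ * x₁) * (x₂ * (y₂ * z) - (y₂ * z) * x₂)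
          - (x₂ * (y₂ * z) - (y₂ * z) * x₂) * (x₁ * y₁ - y₁ * x₁))
        - ((x₁ * y₁ - y₁ * x₁) * (x₂ * y₂ - y₂ * x₂)
          - (x₂ * y₂ - y₂ * x₂) * (x₁ * y₁ - y₁ * x₁)) * z
        - y₂ * ((x₁ * y₁ - y₁ * x₁) * (x₂ * z - z * x₂)
          - (x₂ * z - z * x₂) * (x₁ * y₁ - y₁ * x₁)) := by noncomm_ring
  rw [key, h1, h2, h3]
  noncomm_ring
end

section
/- Let F be a field of prime characteristic p, C = F[c_1,...,c_{p+1}]/(c_i^2), and A(C) = {[[u,v],[0,0]] : u,v in C}. Set x = [[c_1 + ... + c_{p-1}, c_p],[0,0]] and y = [[c_{p+1}, 0],[0,0]]. Then [x^p, y] = -[[0, (p-1)! * c_1*c_2*...*c_{p+1}],[0,0]] ≠ 0. In particular A(C) does not satisfy the identity [x^p, y] = 0. -/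
/-!
Since `x` has zero second row, `x ^ p = [[u ^ p, u ^ (p-1) v], [0, 0]]` with `u = c₁ + ⋯ + c_{p-1}`,
`v = c_p`, and its commutator with `y = [[w, 0], [0, 0]]` is `-[[0, u ^ (p-1) v w], [0, 0]]`.
As the `cᵢ` square to zero, `u ^ (p-1) = (p-1)! c₁⋯c_{p-1}`, so the corner entry is
`(p-1)! c₁⋯c_{p+1}`. This is nonzero because `(p-1)!` is a unit in characteristic `p` and the
squarefree monomial `c₁⋯c_{p+1}` is not in the monomial ideal `(cᵢ²)`.
-/

open MvPolynomial

/-- `C = F[c₁,…,c_{p+1}]/(cᵢ²)` (variables indexed by `Fin (p+1)`). -/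
abbrev Cfin (F : Type*) [Field F] (p : ℕ) :=
  MvPolynomial (Fin (p + 1)) F ⧸
    Ideal.span (Set.range fun i : Fin (p + 1) => (X i : MvPolynomial (Fin (p + 1)) F) ^ 2)

/-- The generator `c_{i+1}` of `C` (0-based index `i`). -/
noncomputable def cgen (F : Type*) [Field F] (p : ℕ) (i : Fin (p + 1)) : Cfin F p :=
  Ideal.Quotient.mk _ (X i)

open Finset
open scoped Nat

section SquareZero
variable {R : Type*} [CommRing R]

theorem add_pow_succ_of_sq_eq_zero {a : R} (ha : a ^ 2 = 0) (b : R) (n : ℕ) :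
    (a + b) ^ (n + 1) = b ^ (n + 1) + (n + 1) * a * b ^ n := by
  induction n with
  | zero => simp [add_comm]
  | succ n ih =>
    rw [pow_succ, ih]
    push_cast
    linear_combination (n + 1 : R) * b ^ n * ha

variable {ι : Type*} [DecidableEq ι]

theorem sum_mul_prod_eq_zero_of_sq_eq_zero {s : Finset ι} {a : ι → R}
    (ha : ∀ i ∈ s, a i ^ 2 = 0) : (∑ i ∈ s, a i) * ∏ i ∈ s, a i = 0 := by
  rw [sum_mul]
  refine sum_eq_zero fun i hi => ?_
  rw [← mul_prod_erase s a hi, ← mul_assoc, ← sq, ha i hi, zero_mul]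

theorem sum_pow_card_eq_factorial_mul_prod {s : Finset ι} {a : ι → R}
    (ha : ∀ i ∈ s, a i ^ 2 = 0) : (∑ i ∈ s, a i) ^ #s = (#s)! * ∏ i ∈ s, a i := by
  induction s using Finset.induction_on with
  | empty => simp
  | @insert j s hj ih =>
    have hs : ∀ i ∈ s, a i ^ 2 = 0 := fun i hi => ha i (mem_insert_of_mem hi)
    rw [sum_insert hj, card_insert_of_notMem hj, prod_insert hj,
      add_pow_succ_of_sq_eq_zero (ha j (mem_insert_self j s)), pow_succ, ih hs,
      Nat.factorial_succ]
    push_cast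
    linear_combination (#s)! * sum_mul_prod_eq_zero_of_sq_eq_zero hs

end SquareZero

section UpperRow
variable {R : Type*} [CommRing R]

theorem matrix_upper_row_pow {n : ℕ} (hn : n ≠ 0) (u v : R) :
    !![u, v; 0, 0] ^ n = !![u ^ n, u ^ (n - 1) * v; 0, 0] := by
  obtain ⟨n, rfl⟩ := Nat.exists_eq_add_one_of_ne_zero hn
  induction n with
  | zero => simp
  | succ n ih =>
    rw [pow_succ, ih n.succ_ne_zero, Matrix.mul_fin_two]
    simp [pow_succ]

theorem matrix_upper_row_commutator (a b w : R) :
    !![a, b; 0, 0] * !![w, 0; 0, 0] - !![w, 0; 0, 0] * !![a, b; 0, 0] = -!![0, b * w; 0, 0] := by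
  rw [Matrix.mul_fin_two, Matrix.mul_fin_two]
  ext i j
  fin_cases i <;> fin_cases j <;> simp [mul_comm]

end UpperRow

theorem Fin.prod_univ_eq_prod_filter_lt_pred_mul {M : Type*} [CommMonoid M] {p : ℕ} (hp : 0 < p)
    (f : Fin (p + 1) → M) {j k : Fin (p + 1)} (hj : (j : ℕ) = p - 1) (hk : (k : ℕ) = p) :
    ∏ i, f i = (∏ i ∈ univ.filter (fun i : Fin (p + 1) => (i : ℕ) < p - 1), f i) * (f j * f k) := by
  rw [← prod_filter_mul_prod_filter_not univ fun i : Fin (p + 1) => (i : ℕ) < p - 1]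
  congr 1
  have hrest : univ.filter (fun i : Fin (p + 1) => ¬ (i : ℕ) < p - 1) = {j, k} := by
    ext i
    simp only [mem_filter, mem_univ, true_and, mem_insert, mem_singleton, Fin.ext_iff]
    omega
  rw [hrest, prod_pair (by simp [Fin.ext_iff]; omega)]

namespace MvPolynomial
variable {σ R : Type*} [CommRing R] [Fintype σ]

theorem C_mul_prod_X_notMem_span_X_sq {c : R} (hc : c ≠ 0) :
    C c * ∏ i, X i ∉ Ideal.span (Set.range fun i : σ => (X i : MvPolynomial σ R) ^ 2) := by
  classical
  have hspan : Set.range (fun i : σ => (X i : MvPolynomial σ R) ^ 2)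
      = (fun s => monomial s 1) '' Set.range fun i => Finsupp.single i 2 := by
    rw [← Set.range_comp]
    simp only [Function.comp_def, X_pow_eq_monomial]
  have hmon : C c * ∏ i, X i = monomial (∑ i : σ, Finsupp.single i 1) c := by
    conv_rhs => rw [← mul_one c, ← C_mul_monomial, monomial_sum_one]
    rfl
  rw [hspan, hmon, mem_ideal_span_monomial_image, support_monomial, if_neg hc]
  simp only [mem_singleton, forall_eq, Set.mem_range, exists_exists_eq_and, not_exists]
  intro i hle
  simpa using hle i

end MvPolynomial

theorem cgen_sq {F : Type*} [Field F] (p : ℕ) (i : Fin (p + 1)) : cgen F p i ^ 2 = 0 := by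
  rw [cgen, ← map_pow, Ideal.Quotient.eq_zero_iff_mem]
  exact Ideal.subset_span ⟨i, rfl⟩

theorem natCast_mul_prod_cgen_ne_zero {F : Type*} [Field F] {p n : ℕ} (hn : (n : F) ≠ 0) :
    (n : Cfin F p) * ∏ i, cgen F p i ≠ 0 := by
  have hmk : (n : Cfin F p) * ∏ i, cgen F p i = Ideal.Quotient.mk _ (C (n : F) * ∏ i, X i) := by
    simp [cgen, map_prod]
  rw [hmk, Ne, Ideal.Quotient.eq_zero_iff_mem]
  exact C_mul_prod_X_notMem_span_X_sq hn

/-- With `x = [[c₁+⋯+c_{p-1}, c_p],[0,0]]` and `y = [[c_{p+1},0],[0,0]]` in `A(C)`,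
`[x^p, y] = -[[0,(p-1)!·c₁⋯c_{p+1}],[0,0]] ≠ 0`; in particular `A(C)` does not satisfy
the identity `[x^p, y] = 0`. -/
theorem stmt11 {F : Type*} [Field F] (p : ℕ) (hp : p.Prime) [CharP F p] :
    let x : Matrix (Fin 2) (Fin 2) (Cfin F p) :=
      !![∑ i ∈ Finset.univ.filter (fun i : Fin (p + 1) => (i : ℕ) < p - 1), cgen F p i,
         cgen F p ⟨p - 1, by omega⟩; 0, 0]
    let y : Matrix (Fin 2) (Fin 2) (Cfin F p) :=
      !![cgen F p ⟨p, by omega⟩, 0; 0, 0]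
    (x ^ p * y - y * x ^ p
        = -(!![0, ((p - 1).factorial : Cfin F p) * ∏ i : Fin (p + 1), cgen F p i; 0, 0])) ∧
    x ^ p * y - y * x ^ p ≠ 0 := by
  intro x y
  have hcard : #(univ.filter fun i : Fin (p + 1) => (i : ℕ) < p - 1) = p - 1 := by
    rw [Fin.card_filter_val_lt, min_eq_right (by omega)]
  have hpow := sum_pow_card_eq_factorial_mul_prod
    (s := univ.filter fun i : Fin (p + 1) => (i : ℕ) < p - 1) fun i _ => cgen_sq (F := F) p i
  rw [hcard] at hpow
  have hcomm : x ^ p * y - y * x ^ p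
      = -(!![0, ((p - 1).factorial : Cfin F p) * ∏ i : Fin (p + 1), cgen F p i; 0, 0]) := by
    rw [matrix_upper_row_pow hp.ne_zero, matrix_upper_row_commutator, hpow,
      Fin.prod_univ_eq_prod_filter_lt_pred_mul hp.pos _ (j := ⟨p - 1, by omega⟩)
        (k := ⟨p, by omega⟩) rfl rfl, mul_assoc, mul_assoc]
  refine ⟨hcomm, ?_⟩
  have hfact : ((p - 1)! : F) ≠ 0 := by
    rw [Ne, CharP.cast_eq_zero_iff F p, hp.dvd_factorial, not_le]
    exact Nat.sub_one_lt hp.ne_zero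
  rw [hcomm, neg_ne_zero]
  intro h
  exact natCast_mul_prod_cgen_ne_zero hfact (by simpa using congrFun (congrFun h 0) 1)
end

section
/- Let R be an associative ring that satisfies both identities [y,z]*x = x^r*[y,z] and x*[y,z] = [y,z]*x^k for integers r, k > 1, and suppose R is nilpotent. Then R satisfies x*[y,z] = 0 and [y,z]*x = 0 for all x, y, z in R. -/
/-- `pwMul x n a = x^n * a` (in a possibly non-unital ring). -/
def pwMul {R : Type*} [NonUnitalRing R] (x : R) : ℕ → R → R
  | 0, a => a
  | n + 1, a => x * pwMul x n a

/-- `mulPw a x n = a * x^n` (in a possibly non-unital ring). -/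
def mulPw {R : Type*} [NonUnitalRing R] (a x : R) : ℕ → R
  | 0 => a
  | n + 1 => mulPw a x n * x

/-- Product `a * b₁ * ⋯ * bₖ` of a nonempty list of ring elements. -/
def mulList {R : Type*} [NonUnitalRing R] (a : R) (l : List R) : R :=
  l.foldl (· * ·) a

section Aux
variable {R : Type*} [NonUnitalRing R]

lemma mulList_cons (a b : R) (l : List R) : mulList a (b :: l) = mulList (a * b) l := rfl

lemma mul_mulList (x a : R) (l : List R) : x * mulList a l = mulList (x * a) l := by
  induction l generalizing a with
  | nil => rfl
  | cons h t ih =>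
    rw [mulList_cons, ih, mulList_cons, mul_assoc]

lemma mulList_zero (l : List R) : mulList (0 : R) l = 0 := by
  induction l with
  | nil => rfl
  | cons h t ih => rw [mulList_cons, zero_mul, ih]

lemma mulList_append (a : R) (l1 l2 : List R) :
    mulList a (l1 ++ l2) = mulList (mulList a l1) l2 := by
  simp [mulList]

lemma mulList_long (N : ℕ) (hnil : ∀ (a : R) (l : List R), l.length = N → mulList a l = 0)
    (a : R) (l : List R) (h : N ≤ l.length) : mulList a l = 0 := by
  have := List.take_append_drop N l
  rw [← this, mulList_append, hnil a _ (by simp [List.length_take]; omega), mulList_zero]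

lemma mulPw_shift (a x : R) (t : ℕ) : mulPw a x (t + 1) = mulPw (a * x) x t := by
  induction t with
  | zero => rfl
  | succ t ih => rw [mulPw, ih, mulPw]

lemma mulPw_eq_mulList (a x : R) (t : ℕ) : mulPw a x t = mulList a (List.replicate t x) := by
  induction t generalizing a with
  | zero => rfl
  | succ t ih =>
    rw [mulPw_shift, ih, List.replicate_succ, mulList_cons]

lemma mulPw_mul_left (x a : R) (t : ℕ) : mulPw (x * a) x t = x * mulPw a x t := by
  induction t with
  | zero => rfl
  | succ t ih => rw [mulPw, ih, mulPw, mul_assoc]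

lemma pwMul_succ' (x a : R) (n : ℕ) : pwMul x (n + 1) a = pwMul x n (x * a) := by
  induction n generalizing a with
  | zero => rfl
  | succ n ih => rw [pwMul, ih, pwMul]

lemma pwMul_add (x a : R) (m n : ℕ) : pwMul x (m + n) a = pwMul x m (pwMul x n a) := by
  induction m with
  | zero => simp [pwMul]
  | succ m ih =>
    have : m + 1 + n = (m + n) + 1 := by omega
    rw [this, pwMul, ih, pwMul]

lemma pwMul_zero' (x : R) (n : ℕ) : pwMul x n (0 : R) = 0 := by
  induction n with
  | zero => rfl
  | succ n ih => rw [pwMul, ih, mul_zero]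

lemma pwMul_mulPw (x a : R) (s t : ℕ) :
    pwMul x s (mulPw a x t) = mulPw (pwMul x s a) x t := by
  induction s with
  | zero => rfl
  | succ s ih => rw [pwMul, ih, pwMul, mulPw_mul_left]

lemma pwMul_mulList (x b : R) (s : ℕ) (l : List R) :
    ∃ (b' : R) (l' : List R), pwMul x s (mulList b l) = mulList b' l' ∧
      l'.length = s + l.length := by
  induction s with
  | zero => exact ⟨b, l, rfl, (Nat.zero_add _).symm⟩
  | succ s ih =>
    obtain ⟨b', l', h1, h2⟩ := ih
    refine ⟨x, b' :: l', ?_, by simp [h2]; omega⟩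
    rw [pwMul, h1, mulList_cons, mul_mulList]

end Aux

/-- If a nilpotent associative ring satisfies `[y,z]*x = x^r*[y,z]` and
`x*[y,z] = [y,z]*x^k` with `r, k > 1`, then `x*[y,z] = 0` and `[y,z]*x = 0` identically. -/
theorem stmt15 {R : Type*} [NonUnitalRing R]
    (N : ℕ) (hnil : ∀ (a : R) (l : List R), l.length = N → mulList a l = 0)
    (r k : ℕ) (hr : 1 < r) (hk : 1 < k)
    (hid1 : ∀ x y z : R, (y * z - z * y) * x = pwMul x r (y * z - z * y))
    (hid2 : ∀ x y z : R, x * (y * z - z * y) = mulPw (y * z - z * y) x k) :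
    ∀ x y z : R, x * (y * z - z * y) = 0 ∧ (y * z - z * y) * x = 0 := by
  intro x y z
  set c : R := y * z - z * y with hc
  have h1 : c * x = pwMul x r c := hid1 x y z
  have h2 : x * c = mulPw c x k := hid2 x y z
  -- main claim : x*c can be written as x^s * c * x^t with s+t arbitrarily large
  have claim : ∀ n : ℕ, ∃ s t : ℕ, n + 1 ≤ s + t ∧ x * c = pwMul x s (mulPw c x t) := by
    intro n
    induction n with
    | zero => exact ⟨1, 0, le_refl _, by simp [pwMul, mulPw]⟩
    | succ n ih =>
      obtain ⟨s, t, hst, heq⟩ := ih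
      cases t with
      | succ t' =>
        -- mulPw c x (t'+1) = mulPw (c*x) x t' = mulPw (pwMul x r c) x t'
        refine ⟨s + r, t', by omega, ?_⟩
        rw [heq, mulPw_shift, h1, ← pwMul_mulPw, ← pwMul_add]
      | zero =>
        -- t = 0 : pwMul x s c with s ≥ n+1 ≥ 1
        have hs : 1 ≤ s := by omega
        obtain ⟨s', rfl⟩ : ∃ s', s = s' + 1 := ⟨s - 1, by omega⟩
        refine ⟨s', k, by omega, ?_⟩
        rw [heq]
        show pwMul x (s' + 1) (mulPw c x 0) = _
        rw [show mulPw c x 0 = c from rfl, pwMul_succ', h2]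
  have hxc : x * c = 0 := by
    obtain ⟨s, t, hst, heq⟩ := claim N
    obtain ⟨b', l', h1', h2'⟩ := pwMul_mulList x c s (List.replicate t x)
    rw [heq, mulPw_eq_mulList, h1']
    apply mulList_long N hnil
    simp [h2']
    omega
  refine ⟨hxc, ?_⟩
  obtain ⟨r', rfl⟩ : ∃ r', r = r' + 1 := ⟨r - 1, by omega⟩
  rw [h1, pwMul_succ', hxc, pwMul_zero']
end
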